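/- Fix integers n ≥ 1, L ≥ 1 and d ≥ 0, and let x₁, …, x_n be i.i.d. uniform (Haar) on the complex unit circle U(1) = {z ∈ ℂ : |z| = 1}. Then E[(Σ_{ℓ=1}^{L} |Σ_{j=1}^{n} x_j^ℓ|²)^d] = |M_d^S|, where M_d^S = {(ℓ, a, b) ∈ {1,…,L}^d × {1,…,n}^d × {1,…,n}^d : Σ_{j=1}^{d} ℓ_j (e_{a_j} − e_{b_j}) = 0 in ℤ^n}, with e_1, …, e_n the standard basis vectors of ℤ^n. -/

import Mathlib

/-!
Expanding `|∑ⱼ xⱼ^ℓ|² = ∑_{a,b} x_a^ℓ conj(x_b)^ℓ` and then the `d`-th power writes the integrand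
as a sum, over tuples `(ℓ, a, b)`, of monomials `∏ₛ xₛ^{pₛ} conj(xₛ)^{qₛ}`, where `pₛ` (resp. `qₛ`)
is the total weight `ℓₖ` of the indices `k` with `aₖ = s` (resp. `bₖ = s`). By independence such a
monomial integrates to `∏ₛ E[z^{pₛ} conj(z)^{qₛ}]`, and for `z` uniform on the circle
`E[z^p conj(z)^q] = δ_{pq}`. So the moment counts the tuples with `p = q`, which is the balance
condition `∑ₖ ℓₖ (e_{aₖ} - e_{bₖ}) = 0`.
-/

open MeasureTheory Finset ComplexConjugate

section Combinatorics

variable {ι σ : Type*} [Fintype ι] [DecidableEq σ]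

def fiberWeight (w : ι → ℕ) (a : ι → σ) (s : σ) : ℕ := ∑ k with a k = s, w k

theorem prod_pow_eq_prod_pow_fiberWeight [Fintype σ] {M : Type*} [CommMonoid M]
    (v : σ → M) (a : ι → σ) (w : ι → ℕ) :
    ∏ k, v (a k) ^ w k = ∏ s, v s ^ fiberWeight w a s := by
  rw [← prod_fiberwise univ a]
  refine prod_congr rfl fun s _ => ?_
  rw [fiberWeight, ← prod_pow_eq_pow_sum]
  exact prod_congr rfl fun k hk => by rw [(mem_filter.mp hk).2]

theorem sum_mul_indicator_sub_eq_zero_iff (w : ι → ℕ) (a b : ι → σ) (s : σ) :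
    ∑ k, (w k : ℤ) * ((if a k = s then 1 else 0) - (if b k = s then 1 else 0)) = 0 ↔
      fiberWeight w a s = fiberWeight w b s := by
  simp only [mul_sub, mul_ite, mul_one, mul_zero, sum_sub_distrib, sub_eq_zero,
    ← sum_filter, fiberWeight]
  exact_mod_cast Iff.rfl

end Combinatorics

theorem pow_sum_sum_sum {R α β γ : Type*} [CommSemiring R] [Fintype β] [Fintype γ]
    (s : Finset α) (f : α → β → γ → R) (d : ℕ) :
    (∑ l ∈ s, ∑ a, ∑ b, f l a b) ^ d =
      ∑ t ∈ Fintype.piFinset (fun _ : Fin d => s) ×ˢ (univ : Finset ((Fin d → β) × (Fin d → γ))),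
        ∏ k, f (t.1 k) (t.2.1 k) (t.2.2 k) := by
  rw [← Fin.prod_const, prod_univ_sum, sum_product]
  refine sum_congr rfl fun l _ => ?_
  rw [Fintype.prod_sum, ← univ_product_univ, sum_product]
  refine sum_congr rfl fun a _ => ?_
  exact Fintype.prod_sum _

noncomputable def uniformAngle : Measure ℝ :=
  (ENNReal.ofReal (2 * Real.pi))⁻¹ • volume.restrict (Set.Ico 0 (2 * Real.pi))

noncomputable def uniformCircle : Measure ℂ :=
  uniformAngle.map fun t : ℝ => Complex.exp (Complex.I * t)

theorem continuous_exp_I_mul : Continuous fun t : ℝ => Complex.exp (Complex.I * t) := by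
  fun_prop

theorem ae_norm_eq_one_uniformCircle : ∀ᵐ z ∂uniformCircle, ‖z‖ = 1 :=
  (ae_map_iff continuous_exp_I_mul.aemeasurable
    (measurableSet_eq_fun (by fun_prop) (by fun_prop))).mpr
      (ae_of_all _ fun t => by simp [Complex.norm_exp])

theorem integral_exp_int_mul_uniformAngle (k : ℤ) :
    ∫ t, Complex.exp (Complex.I * k * t) ∂uniformAngle = if k = 0 then 1 else 0 := by
  have h2π : (0 : ℝ) < 2 * Real.pi := by positivity
  rw [uniformAngle, integral_smul_measure, ENNReal.toReal_inv, ENNReal.toReal_ofReal h2π.le,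
    setIntegral_congr_set Ico_ae_eq_Ioc, ← intervalIntegral.integral_of_le h2π.le]
  split_ifs with hk
  · simp only [hk, Int.cast_zero, mul_zero, zero_mul, Complex.exp_zero,
      intervalIntegral.integral_const, sub_zero, smul_smul, inv_mul_cancel₀ h2π.ne', one_smul]
  · have hc : Complex.I * k ≠ 0 := by simp [Complex.I_ne_zero, hk]
    have hperiod : Complex.exp (Complex.I * k * (2 * Real.pi)) = 1 := by
      rw [← Complex.exp_int_mul_two_pi_mul_I k]; ring_nf
    simp [integral_exp_mul_complex hc, hperiod]

theorem integral_uniformCircle_pow_mul_conj_pow (p q : ℕ) :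
    ∫ z, z ^ p * conj z ^ q ∂uniformCircle = if p = q then 1 else 0 := by
  have hexp : ∀ t : ℝ, Complex.exp (Complex.I * t) ^ p * conj (Complex.exp (Complex.I * t)) ^ q
      = Complex.exp (Complex.I * ((p - q : ℤ) : ℂ) * t) := fun t => by
    rw [← Complex.exp_conj, ← Complex.exp_nat_mul, ← Complex.exp_nat_mul, ← Complex.exp_add]
    simp only [map_mul, Complex.conj_I, Complex.conj_ofReal]
    push_cast; ring_nf
  rw [uniformCircle, integral_map continuous_exp_I_mul.aemeasurable (by fun_prop)]
  simp_rw [hexp, integral_exp_int_mul_uniformAngle, sub_eq_zero, Nat.cast_inj]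

section Moments

variable {μ : Measure ℂ} [IsFiniteMeasure μ]

theorem integrable_pow_mul_conj_pow (hμ : ∀ᵐ z ∂μ, ‖z‖ = 1) (p q : ℕ) :
    Integrable (fun z => z ^ p * conj z ^ q) μ :=
  Integrable.of_bound (by fun_prop) 1 <| hμ.mono fun z hz => by simp [hz]

variable {ι σ : Type*} [Fintype ι] [Fintype σ] [DecidableEq σ]

theorem prod_pow_mul_conj_pow_eq_prod_fiberWeight (x : σ → ℂ) (w : ι → ℕ) (a b : ι → σ) :
    ∏ k, x (a k) ^ w k * conj (x (b k)) ^ w k =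
      ∏ s, x s ^ fiberWeight w a s * conj (x s) ^ fiberWeight w b s := by
  rw [prod_mul_distrib, prod_mul_distrib, prod_pow_eq_prod_pow_fiberWeight x,
    prod_pow_eq_prod_pow_fiberWeight (fun s => conj (x s))]

theorem integrable_pi_prod_pow_mul_conj_pow (hμ : ∀ᵐ z ∂μ, ‖z‖ = 1) (w : ι → ℕ) (a b : ι → σ) :
    Integrable (fun x : σ → ℂ => ∏ k, x (a k) ^ w k * conj (x (b k)) ^ w k)
      (Measure.pi fun _ => μ) := by
  simp_rw [prod_pow_mul_conj_pow_eq_prod_fiberWeight]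
  exact Integrable.fintype_prod fun s => integrable_pow_mul_conj_pow hμ _ _

theorem integral_pi_prod_pow_mul_conj_pow
    (hmom : ∀ p q : ℕ, ∫ z, z ^ p * conj z ^ q ∂μ = if p = q then 1 else 0)
    (w : ι → ℕ) (a b : ι → σ) :
    ∫ x : σ → ℂ, ∏ k, x (a k) ^ w k * conj (x (b k)) ^ w k ∂(Measure.pi fun _ => μ) =
      if ∀ s, fiberWeight w a s = fiberWeight w b s then 1 else 0 := by
  simp_rw [prod_pow_mul_conj_pow_eq_prod_fiberWeight]
  rw [integral_fintype_prod_eq_prod (fun s z => z ^ fiberWeight w a s * conj z ^ fiberWeight w b s)]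
  simp [hmom, prod_boole]

theorem integral_sum_norm_sum_pow_sq_pow (hμ : ∀ᵐ z ∂μ, ‖z‖ = 1)
    (hmom : ∀ p q : ℕ, ∫ z, z ^ p * conj z ^ q ∂μ = if p = q then 1 else 0)
    (S : Finset ℕ) (d : ℕ) :
    ∫ x : σ → ℂ, (∑ ℓ ∈ S, ‖∑ j, x j ^ ℓ‖ ^ 2) ^ d ∂(Measure.pi fun _ => μ) =
      #{t ∈ Fintype.piFinset (fun _ : Fin d => S) ×ˢ (univ : Finset ((Fin d → σ) × (Fin d → σ))) |
        ∀ s, fiberWeight t.1 t.2.1 s = fiberWeight t.1 t.2.2 s} := by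
  have hexpand : ∀ x : σ → ℂ, (((∑ ℓ ∈ S, ‖∑ j, x j ^ ℓ‖ ^ 2) ^ d : ℝ) : ℂ) =
      ∑ t ∈ Fintype.piFinset (fun _ : Fin d => S) ×ˢ (univ : Finset ((Fin d → σ) × (Fin d → σ))),
        ∏ k, x (t.2.1 k) ^ t.1 k * conj (x (t.2.2 k)) ^ t.1 k := fun x => by
    have hnorm_sq : ∀ ℓ : ℕ, ((‖∑ j, x j ^ ℓ‖ ^ 2 : ℝ) : ℂ) =
        ∑ a, ∑ b, x a ^ ℓ * conj (x b) ^ ℓ := fun ℓ => by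
      rw [Complex.ofReal_pow, ← Complex.mul_conj', map_sum, sum_mul_sum]
      simp_rw [map_pow]
    rw [Complex.ofReal_pow, Complex.ofReal_sum]
    simp_rw [hnorm_sq]
    rw [pow_sum_sum_sum]
  apply Complex.ofReal_injective
  rw [← integral_complex_ofReal]
  simp_rw [hexpand]
  rw [integral_finsetSum _ fun t _ => integrable_pi_prod_pow_mul_conj_pow hμ _ _ _]
  simp_rw [integral_pi_prod_pow_mul_conj_pow hmom, sum_boole]
  simp

end Moments

theorem stmt3_general (n L d : ℕ)
    (μS : Measure ℂ) [IsProbabilityMeasure μS]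
    (hμS : μS = Measure.map (fun t : ℝ => Complex.exp (Complex.I * (t : ℂ)))
      ((ENNReal.ofReal (2 * Real.pi))⁻¹ • volume.restrict (Set.Ico 0 (2 * Real.pi)))) :
    ∫ x : Fin n → ℂ, (∑ ℓ ∈ Finset.Icc 1 L, ‖∑ j, x j ^ ℓ‖ ^ 2) ^ d
        ∂(Measure.pi fun _ => μS)
    = (Nat.card {t : (Fin d → ℕ) × (Fin d → Fin n) × (Fin d → Fin n) //
        (∀ j, t.1 j ∈ Finset.Icc 1 L) ∧
        ∀ s : Fin n, (∑ j, (t.1 j : ℤ) *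
          ((if t.2.1 j = s then 1 else 0) - (if t.2.2 j = s then 1 else 0))) = 0} : ℝ) := by
  obtain rfl : μS = uniformCircle := hμS
  rw [integral_sum_norm_sum_pow_sq_pow ae_norm_eq_one_uniformCircle
    integral_uniformCircle_pow_mul_conj_pow, ← Nat.card_eq_finsetCard]
  congr 1
  refine Nat.card_congr (Equiv.subtypeEquivRight fun t => ?_)
  simp [sum_mul_indicator_sub_eq_zero_iff]

/-- **Moments of the multi-frequency correlation under the uniform `U(1)` prior
as a combinatorial count.** For `x₁,…,x_n` i.i.d. uniform (Haar) on the unit circle,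
`E[(∑_{ℓ=1}^L |∑_j x_j^ℓ|²)^d] = |M_d^𝕊|` where `M_d^𝕊` is the set of tuples
`(ℓ,a,b) ∈ [L]^d × [n]^d × [n]^d` with `∑_j ℓ_j (e_{a_j} - e_{b_j}) = 0` in `ℤ^n`. -/
theorem stmt3 (n L d : ℕ) (hn : 1 ≤ n) (hL : 1 ≤ L)
    (μS : Measure ℂ) [IsProbabilityMeasure μS]
    (hμS : μS = Measure.map (fun t : ℝ => Complex.exp (Complex.I * (t : ℂ)))
      ((ENNReal.ofReal (2 * Real.pi))⁻¹ • volume.restrict (Set.Ico 0 (2 * Real.pi)))) :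
    ∫ x : Fin n → ℂ, (∑ ℓ ∈ Finset.Icc 1 L, ‖∑ j, x j ^ ℓ‖ ^ 2) ^ d
        ∂(Measure.pi fun _ => μS)
    = (Nat.card {t : (Fin d → ℕ) × (Fin d → Fin n) × (Fin d → Fin n) //
        (∀ j, t.1 j ∈ Finset.Icc 1 L) ∧
        ∀ s : Fin n, (∑ j, (t.1 j : ℤ) *
          ((if t.2.1 j = s then 1 else 0) - (if t.2.2 j = s then 1 else 0))) = 0} : ℝ) :=
  stmt3_general n L d μS hμS
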